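/- arXiv:1807.04123 — 2 statements merged into one kernel-verified Lean document; each statement's English description precedes it below -/
import Mathlib

section
/- Let η ≥ 0, T > 0, and let u, w : [0,T] × ℝⁿ → ℝⁿ and p : [0,T] × ℝⁿ → ℝ be smooth and ℤⁿ-periodic in the space variable, with div u_t = 0 and div w_t = 0 for each t, satisfying ∂_t w = −∇_u w − u'⊗w − ∇p + ηΔw on [0,T] × ℝⁿ. Then the energy identity holds for all t ∈ [0,T]: d/dt (½ ∫_{[0,1]ⁿ} |w(t,x)|² dx) = −∫_{[0,1]ⁿ} ⟨(u'⊗w)(t,x), w(t,x)⟩ dx − η ∫_{[0,1]ⁿ} |Dw(t,x)|² dx, where |Dw|² is the squared Frobenius norm of the spatial Jacobian of w. -/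
noncomputable section
open MeasureTheory

/-- Euclidean dot product on `Fin n → ℝ`. -/
def dotp {n : ℕ} (v w : Fin n → ℝ) : ℝ := ∑ i, v i * w i

/-- Advective derivative `(∇_X ξ)(x) = Dξ(x)·X(x)`. -/
def advDeriv {n : ℕ} (X ξ : (Fin n → ℝ) → (Fin n → ℝ)) (x : Fin n → ℝ) : Fin n → ℝ :=
  fderiv ℝ ξ x (X x)

/-- Line stretching term `(X'⊗ξ)(x) = (DX(x))ᵀ·ξ(x)`. -/
def lineStretch {n : ℕ} (X ξ : (Fin n → ℝ) → (Fin n → ℝ)) (x : Fin n → ℝ) : Fin n → ℝ :=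
  fun i => ∑ j, fderiv ℝ X x (Pi.single i 1) j * ξ x j

/-- Divergence of a vector field. -/
def diver {n : ℕ} (ξ : (Fin n → ℝ) → (Fin n → ℝ)) (x : Fin n → ℝ) : ℝ :=
  ∑ i, fderiv ℝ ξ x (Pi.single i 1) i

/-- Gradient of a scalar function. -/
def gradf {n : ℕ} (f : (Fin n → ℝ) → ℝ) (x : Fin n → ℝ) : Fin n → ℝ :=
  fun i => fderiv ℝ f x (Pi.single i 1)

/-- Componentwise Laplacian. -/
def lap {n : ℕ} (ξ : (Fin n → ℝ) → (Fin n → ℝ)) (x : Fin n → ℝ) : Fin n → ℝ :=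
  ∑ j, fderiv ℝ (fun y => fderiv ℝ ξ y (Pi.single j 1)) x (Pi.single j 1)

/-- The unit cube `[0,1]ⁿ`, realizing the torus `ℝⁿ/ℤⁿ`. -/
def cube (n : ℕ) : Set (Fin n → ℝ) := Set.univ.pi fun _ => Set.Icc (0:ℝ) 1

/-- `ℤⁿ`-periodicity. -/
def ZPeriodic {n : ℕ} {α : Type*} (f : (Fin n → ℝ) → α) : Prop :=
  ∀ (x : Fin n → ℝ) (m : Fin n → ℤ), f (x + fun i => (m i : ℝ)) = f x

/-!
The energy density `e = ½|w|²` satisfies `∂ₜe = ⟨∂ₜw, w⟩`, and for divergence-free `u`, `w` the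
right-hand side of the equation splits as
`⟨−∇_u w − u'⊗w − ∇p + ηΔw, w⟩ = −div F − ⟨u'⊗w, w⟩ − η|Dw|²` with `F = e u + p w − η ∇e`,
because `⟨∇_u w, w⟩ = u·∇e = div (e u)`, `⟨∇p, w⟩ = div (p w)` and `⟨Δw, w⟩ = Δe − |Dw|²`.
The flux `F` is `ℤⁿ`-periodic, so by the divergence theorem its divergence integrates to zero over
the unit cube, opposite faces cancelling. Differentiation under the integral sign in `t` is
justified by the uniform continuity of `∂ₜe` on `[0,T] × [0,1]ⁿ`.
-/

open Set Asymptotics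

section VectorCalculus

variable {n : ℕ}

lemma dotp_eq_dotProduct (v w : Fin n → ℝ) : dotp v w = v ⬝ᵥ w := rfl

lemma dotp_gradf (f : (Fin n → ℝ) → ℝ) (x v : Fin n → ℝ) :
    dotp (gradf f x) v = fderiv ℝ f x v := by
  conv_rhs => rw [pi_eq_sum_univ' v]
  simp [dotp, gradf, mul_comm]

theorem HasDerivWithinAt.dotp {f g : ℝ → Fin n → ℝ} {f' g' : Fin n → ℝ} {s : Set ℝ} {t : ℝ}
    (hf : HasDerivWithinAt f f' s t) (hg : HasDerivWithinAt g g' s t) :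
    HasDerivWithinAt (fun τ => _root_.dotp (f τ) (g τ))
      (_root_.dotp f' (g t) + _root_.dotp (f t) g') s t := by
  simp only [_root_.dotp, ← Finset.sum_add_distrib]
  exact HasDerivWithinAt.fun_sum fun i _ =>
    (hasDerivWithinAt_pi.1 hf i).mul (hasDerivWithinAt_pi.1 hg i)

theorem DifferentiableAt.dotp {E : Type*} [NormedAddCommGroup E] [NormedSpace ℝ E]
    {f g : E → Fin n → ℝ} {x : E} (hf : DifferentiableAt ℝ f x) (hg : DifferentiableAt ℝ g x) :
    DifferentiableAt ℝ (fun y => _root_.dotp (f y) (g y)) x :=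
  DifferentiableAt.fun_sum fun i _ =>
    (differentiableAt_pi.1 hf i).fun_mul (differentiableAt_pi.1 hg i)

lemma fderiv_dotp_apply {E : Type*} [NormedAddCommGroup E] [NormedSpace ℝ E]
    {f g : E → Fin n → ℝ} {x : E} (hf : DifferentiableAt ℝ f x) (hg : DifferentiableAt ℝ g x)
    (v : E) :
    fderiv ℝ (fun y => dotp (f y) (g y)) x v
      = dotp (fderiv ℝ f x v) (g x) + dotp (f x) (fderiv ℝ g x v) := by
  have hfi := differentiableAt_pi.1 hf
  have hgi := differentiableAt_pi.1 hg
  simp only [dotp, ← Finset.sum_add_distrib]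
  rw [fderiv_fun_sum fun i _ => (hfi i).fun_mul (hgi i), sum_apply]
  refine Finset.sum_congr rfl fun i _ => ?_
  rw [fderiv_fun_mul (hfi i) (hgi i), fderiv_apply hf, fderiv_apply hg]
  simp only [add_apply, smul_apply, smul_eq_mul,
    ContinuousLinearMap.comp_apply, ContinuousLinearMap.proj_apply]
  ring

lemma contDiff_fderiv_apply {E F : Type*} [NormedAddCommGroup E] [NormedSpace ℝ E]
    [NormedAddCommGroup F] [NormedSpace ℝ F] {f : E → F} {k : ℕ} (hf : ContDiff ℝ (k + 1) f)
    (v : E) : ContDiff ℝ k fun x => fderiv ℝ f x v :=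
  (hf.fderiv_right le_rfl).clm_apply contDiff_const

lemma diver_eq_sum_fderiv_apply {ξ : (Fin n → ℝ) → (Fin n → ℝ)} {x : Fin n → ℝ}
    (hξ : DifferentiableAt ℝ ξ x) :
    diver ξ x = ∑ i, fderiv ℝ (fun y => ξ y i) x (Pi.single i 1) := by
  simp [diver, fderiv_apply hξ]

lemma diver_fun_add {f g : (Fin n → ℝ) → (Fin n → ℝ)} {x : Fin n → ℝ}
    (hf : DifferentiableAt ℝ f x) (hg : DifferentiableAt ℝ g x) :
    diver (fun y => f y + g y) x = diver f x + diver g x := by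
  simp [diver, fderiv_fun_add hf hg, Finset.sum_add_distrib]

lemma diver_fun_sub {f g : (Fin n → ℝ) → (Fin n → ℝ)} {x : Fin n → ℝ}
    (hf : DifferentiableAt ℝ f x) (hg : DifferentiableAt ℝ g x) :
    diver (fun y => f y - g y) x = diver f x - diver g x := by
  simp [diver, fderiv_fun_sub hf hg, Finset.sum_sub_distrib]

lemma diver_fun_const_smul {f : (Fin n → ℝ) → (Fin n → ℝ)} {x : Fin n → ℝ}
    (hf : DifferentiableAt ℝ f x) (c : ℝ) :
    diver (fun y => c • f y) x = c * diver f x := by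
  simp [diver, fderiv_fun_const_smul hf, Finset.mul_sum]

lemma diver_fun_smul {φ : (Fin n → ℝ) → ℝ} {f : (Fin n → ℝ) → (Fin n → ℝ)} {x : Fin n → ℝ}
    (hφ : DifferentiableAt ℝ φ x) (hf : DifferentiableAt ℝ f x) :
    diver (fun y => φ y • f y) x = dotp (gradf φ x) (f x) + φ x * diver f x := by
  simp [diver, dotp, gradf, fderiv_fun_smul hφ hf, Finset.sum_add_distrib, Finset.mul_sum,
    mul_comm, add_comm]

end VectorCalculus

lemma cube_eq_Icc (n : ℕ) : cube n = Icc (0 : Fin n → ℝ) 1 := by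
  rw [cube, ← pi_univ_Icc]
  rfl

lemma isCompact_cube (n : ℕ) : IsCompact (cube n) := by
  rw [cube_eq_Icc]
  exact isCompact_Icc

section Torus

variable {n : ℕ}

lemma ZPeriodic.fderiv {E : Type*} [NormedAddCommGroup E] [NormedSpace ℝ E]
    {f : (Fin n → ℝ) → E} (hf : ZPeriodic f) : ZPeriodic (fderiv ℝ f) := fun x m => by
  rw [← fderiv_comp_add_right]
  simp only [hf _ m]

lemma ZPeriodic.gradf {f : (Fin n → ℝ) → ℝ} (hf : ZPeriodic f) : ZPeriodic (gradf f) :=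
  fun x m => by
    unfold _root_.gradf
    rw [hf.fderiv x m]

lemma ContDiff.continuous_diver {F : (Fin n → ℝ) → (Fin n → ℝ)} (hF : ContDiff ℝ 1 F) :
    Continuous (diver F) := by
  have := hF.continuous_fderiv one_ne_zero
  unfold diver
  fun_prop

theorem integral_cube_diver_eq_zero {F : (Fin n → ℝ) → (Fin n → ℝ)} (hF : ContDiff ℝ 1 F)
    (hper : ZPeriodic F) : ∫ x in cube n, diver F x = 0 := by
  cases n with
  | zero => simp [diver]
  | succ m =>
    rw [cube_eq_Icc]
    unfold diver
    rw [integral_divergence_of_hasFDerivAt_off_countable 0 1 zero_le_one F (fderiv ℝ F) ∅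
      countable_empty hF.continuous.continuousOn
      (fun x _ => (hF.differentiable one_ne_zero x).hasFDerivAt)
      (hF.continuous_diver.continuousOn.integrableOn_compact isCompact_Icc)]
    refine Finset.sum_eq_zero fun j _ => sub_eq_zero.2 <|
      setIntegral_congr_fun measurableSet_Icc fun x _ => ?_
    have hshift : j.insertNth ((1 : Fin (m + 1) → ℝ) j) x
        = j.insertNth ((0 : Fin (m + 1) → ℝ) j) x
          + fun k => ((Pi.single j 1 : Fin (m + 1) → ℤ) k : ℝ) := by
      funext k
      refine Fin.succAboveCases j ?_ (fun l => ?_) k <;> simp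
    simp only [hshift, hper _ _]

end Torus

section EnergyBalance

variable {n : ℕ}

def linearizedRHS (η : ℝ) (U W : (Fin n → ℝ) → (Fin n → ℝ)) (P : (Fin n → ℝ) → ℝ)
    (x : Fin n → ℝ) : Fin n → ℝ :=
  -advDeriv U W x - lineStretch U W x - gradf P x + η • lap W x

def energyDensity (W : (Fin n → ℝ) → (Fin n → ℝ)) (x : Fin n → ℝ) : ℝ :=
  2⁻¹ * dotp (W x) (W x)

def energyFlux (η : ℝ) (U W : (Fin n → ℝ) → (Fin n → ℝ)) (P : (Fin n → ℝ) → ℝ)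
    (x : Fin n → ℝ) : Fin n → ℝ :=
  energyDensity W x • U x + P x • W x - η • gradf (energyDensity W) x

lemma fderiv_energyDensity_apply {W : (Fin n → ℝ) → (Fin n → ℝ)} {x : Fin n → ℝ}
    (hW : DifferentiableAt ℝ W x) (v : Fin n → ℝ) :
    fderiv ℝ (energyDensity W) x v = dotp (fderiv ℝ W x v) (W x) := by
  unfold energyDensity
  rw [fderiv_const_mul (hW.dotp hW), smul_apply, fderiv_dotp_apply hW hW,
    dotp_eq_dotProduct, dotp_eq_dotProduct, dotProduct_comm (W x), smul_eq_mul]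
  ring

lemma contDiff_energyDensity {W : (Fin n → ℝ) → (Fin n → ℝ)} {k : WithTop ℕ∞}
    (hW : ContDiff ℝ k W) : ContDiff ℝ k (energyDensity W) := by
  unfold energyDensity dotp
  fun_prop

lemma diver_gradf_energyDensity {W : (Fin n → ℝ) → (Fin n → ℝ)} (hW : ContDiff ℝ 2 W)
    (x : Fin n → ℝ) :
    diver (gradf (energyDensity W)) x
      = dotp (lap W x) (W x)
        + ∑ i, dotp (fderiv ℝ W x (Pi.single i 1)) (fderiv ℝ W x (Pi.single i 1)) := by
  have hW1 : Differentiable ℝ W := hW.differentiable (by norm_num)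
  have hDW : ∀ i, Differentiable ℝ fun y => fderiv ℝ W y (Pi.single i 1) := fun i =>
    (contDiff_fderiv_apply (k := 1) hW _).differentiable one_ne_zero
  have hgrad : gradf (energyDensity W) = fun y i => dotp (fderiv ℝ W y (Pi.single i 1)) (W y) :=
    funext fun y => funext fun i => fderiv_energyDensity_apply (hW1 y) _
  rw [hgrad, diver_eq_sum_fderiv_apply (differentiableAt_pi.2 fun i => (hDW i x).dotp (hW1 x)),
    Finset.sum_congr rfl fun i _ => fderiv_dotp_apply (hDW i x) (hW1 x) _,
    Finset.sum_add_distrib, lap, dotp_eq_dotProduct, sum_dotProduct]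
  rfl

lemma ZPeriodic.energyFlux (η : ℝ) {U W : (Fin n → ℝ) → (Fin n → ℝ)} {P : (Fin n → ℝ) → ℝ}
    (hU : ZPeriodic U) (hW : ZPeriodic W) (hP : ZPeriodic P) :
    ZPeriodic (energyFlux η U W P) := fun x m => by
  have he : ZPeriodic (energyDensity W) := fun y m => by simp only [energyDensity, hW y m]
  simp only [_root_.energyFlux, hU x m, hW x m, hP x m, he x m, he.gradf x m]

lemma contDiff_energyFlux (η : ℝ) {U W : (Fin n → ℝ) → (Fin n → ℝ)} {P : (Fin n → ℝ) → ℝ}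
    (hU : ContDiff ℝ 1 U) (hW : ContDiff ℝ 2 W) (hP : ContDiff ℝ 1 P) :
    ContDiff ℝ 1 (energyFlux η U W P) := by
  have hW1 : ContDiff ℝ 1 W := hW.of_le (by norm_num)
  have he := contDiff_energyDensity hW1
  have hgrad : ContDiff ℝ 1 (gradf (energyDensity W)) :=
    contDiff_pi.2 fun i => contDiff_fderiv_apply (contDiff_energyDensity hW) _
  unfold energyFlux
  fun_prop

theorem dotp_linearizedRHS_self (η : ℝ) {U W : (Fin n → ℝ) → (Fin n → ℝ)}
    {P : (Fin n → ℝ) → ℝ} {x : Fin n → ℝ} (hU : DifferentiableAt ℝ U x)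
    (hP : DifferentiableAt ℝ P x) (hW : ContDiff ℝ 2 W) (hdU : diver U x = 0)
    (hdW : diver W x = 0) :
    dotp (linearizedRHS η U W P x) (W x)
      = -diver (energyFlux η U W P) x - dotp (lineStretch U W x) (W x)
        - η * ∑ i, dotp (fderiv ℝ W x (Pi.single i 1)) (fderiv ℝ W x (Pi.single i 1)) := by
  have hW1 : DifferentiableAt ℝ W x := hW.differentiable (by norm_num) x
  have he : DifferentiableAt ℝ (energyDensity W) x :=
    (contDiff_energyDensity hW).differentiable (by norm_num) x
  have hgrad : DifferentiableAt ℝ (gradf (energyDensity W)) x := differentiableAt_pi.2 fun i =>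
    (contDiff_fderiv_apply (k := 1) (contDiff_energyDensity hW) _).differentiable one_ne_zero x
  have heU : DifferentiableAt ℝ (fun y => energyDensity W y • U y) x := he.smul hU
  have hPW : DifferentiableAt ℝ (fun y => P y • W y) x := hP.smul hW1
  have hsum : DifferentiableAt ℝ (fun y => energyDensity W y • U y + P y • W y) x := heU.add hPW
  have hηgrad : DifferentiableAt ℝ (fun y => η • gradf (energyDensity W) y) x :=
    hgrad.const_smul η
  have hdiv : diver (energyFlux η U W P) x
      = dotp (advDeriv U W x) (W x) + dotp (gradf P x) (W x)
        - η * (dotp (lap W x) (W x)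
          + ∑ i, dotp (fderiv ℝ W x (Pi.single i 1)) (fderiv ℝ W x (Pi.single i 1))) := by
    unfold energyFlux
    rw [diver_fun_sub hsum hηgrad, diver_fun_add heU hPW,
      diver_fun_smul he hU, diver_fun_smul hP hW1, diver_fun_const_smul hgrad,
      diver_gradf_energyDensity hW, hdU, hdW, dotp_gradf, fderiv_energyDensity_apply hW1,
      advDeriv]
    ring
  rw [hdiv, linearizedRHS]
  simp only [dotp_eq_dotProduct, add_dotProduct, sub_dotProduct, neg_dotProduct, smul_dotProduct,
    smul_eq_mul]
  ring

theorem integral_cube_dotp_linearizedRHS_self (η : ℝ) {U W : (Fin n → ℝ) → (Fin n → ℝ)}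
    {P : (Fin n → ℝ) → ℝ} (hU : ContDiff ℝ 1 U) (hW : ContDiff ℝ 2 W) (hP : ContDiff ℝ 1 P)
    (hUper : ZPeriodic U) (hWper : ZPeriodic W) (hPper : ZPeriodic P)
    (hdU : ∀ x, diver U x = 0) (hdW : ∀ x, diver W x = 0) :
    ∫ x in cube n, dotp (linearizedRHS η U W P x) (W x)
      = -(∫ x in cube n, dotp (lineStretch U W x) (W x))
        - η * ∫ x in cube n, ∑ i, dotp (fderiv ℝ W x (Pi.single i 1))
            (fderiv ℝ W x (Pi.single i 1)) := by
  have hF := contDiff_energyFlux η hU hW hP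
  have hdiv := hF.continuous_diver
  have hDU := hU.continuous_fderiv one_ne_zero
  have hDW := (hW.of_le (by norm_num : (1 : WithTop ℕ∞) ≤ 2)).continuous_fderiv one_ne_zero
  have hWc := hW.continuous
  have hstretch : Continuous fun x => dotp (lineStretch U W x) (W x) := by
    unfold dotp lineStretch
    fun_prop
  have hdiss : Continuous fun x => ∑ i, dotp (fderiv ℝ W x (Pi.single i 1))
      (fderiv ℝ W x (Pi.single i 1)) := by
    unfold dotp
    fun_prop
  have hint : ∀ {f : (Fin n → ℝ) → ℝ}, Continuous f → IntegrableOn f (cube n) := fun hf =>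
    hf.continuousOn.integrableOn_compact (isCompact_cube n)
  simp only [dotp_linearizedRHS_self η (hU.differentiable one_ne_zero _)
    (hP.differentiable one_ne_zero _) hW (hdU _) (hdW _)]
  rw [integral_sub, integral_sub, integral_neg,
    integral_cube_diver_eq_zero hF (hUper.energyFlux η hWper hPper), integral_const_mul]
  · ring
  all_goals exact hint (by fun_prop)

end EnergyBalance

theorem Convex.norm_sub_sub_smul_le_of_hasDerivWithinAt {F : Type*} [NormedAddCommGroup F]
    [NormedSpace ℝ F] {f f' : ℝ → F} {D : Set ℝ} (hD : Convex ℝ D)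
    (hf : ∀ σ ∈ D, HasDerivWithinAt f (f' σ) D σ) {t τ C : ℝ} (ht : t ∈ D) (hτ : τ ∈ D)
    (hC : ∀ σ ∈ D, ‖f' σ - f' t‖ ≤ C) : ‖f τ - f t - (τ - t) • f' t‖ ≤ C * ‖τ - t‖ := by
  have hg : ∀ σ ∈ D, HasDerivWithinAt (fun σ => f σ - σ • f' t) (f' σ - f' t) D σ :=
    fun σ hσ => by
      simpa using (hf σ hσ).fun_sub ((hasDerivAt_id σ).smul_const (f' t)).hasDerivWithinAt
  convert hD.norm_image_sub_le_of_norm_hasDerivWithin_le hg hC ht hτ using 2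
  rw [sub_smul]
  abel

-- The mean value inequality in `τ` holds uniformly in `x ∈ K` because `G'` is uniformly
-- continuous along the compact fibre `{t} × K`.
theorem hasDerivWithinAt_setIntegral_of_continuousOn {α F : Type*} [TopologicalSpace α]
    [T2Space α] [MeasurableSpace α] [OpensMeasurableSpace α] {μ : Measure α}
    [IsFiniteMeasureOnCompacts μ] [NormedAddCommGroup F] [NormedSpace ℝ F]
    {s : Set ℝ} (hs : Convex ℝ s) {K : Set α} (hK : IsCompact K) {G G' : ℝ → α → F}
    {t : ℝ} (ht : t ∈ s) (hG : ∀ τ ∈ s, ∀ x ∈ K, HasDerivWithinAt (G · x) (G' τ x) s τ)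
    (hGc : ∀ τ ∈ s, ContinuousOn (G τ) K)
    (hG'c : ContinuousOn (Function.uncurry G') (s ×ˢ K)) :
    HasDerivWithinAt (fun τ => ∫ x in K, G τ x ∂μ) (∫ x in K, G' t x ∂μ) s t := by
  have hG't : ContinuousOn (G' t) K :=
    hG'c.comp (continuousOn_const.prodMk continuousOn_id) fun x hx => ⟨ht, hx⟩
  have hGint : ∀ σ ∈ s, IntegrableOn (G σ) K μ := fun σ hσ => (hGc σ hσ).integrableOn_compact hK
  rw [hasDerivWithinAt_iff_isLittleO, isLittleO_iff]
  intro c hc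
  set ε := c / (μ.real K + 1)
  have hεK : ε * μ.real K ≤ c := by
    rw [div_mul_eq_mul_div, div_le_iff₀ (by positivity)]
    nlinarith [measureReal_nonneg (μ := μ) (s := K)]
  obtain ⟨v, hv, hvG'⟩ :=
    hK.mem_uniformity_of_prod hG'c ht (Metric.dist_mem_uniformity (by positivity : 0 < ε))
  obtain ⟨δ, hδ, hδv⟩ := Metric.mem_nhdsWithin_iff.mp hv
  filter_upwards [inter_mem_nhdsWithin s (Metric.ball_mem_nhds t hδ)] with τ hτ
  have hpt : ∀ x ∈ K, ‖G τ x - G t x - (τ - t) • G' t x‖ ≤ ε * ‖τ - t‖ := fun x hx =>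
    ((convex_ball t δ).inter hs).norm_sub_sub_smul_le_of_hasDerivWithinAt
      (fun σ hσ => (hG σ hσ.2 x hx).mono inter_subset_right) ⟨Metric.mem_ball_self hδ, ht⟩
      ⟨hτ.2, hτ.1⟩ fun σ hσ => le_of_lt <| by simpa [dist_eq_norm] using hvG' σ (hδv hσ) x hx
  calc ‖∫ x in K, G τ x ∂μ - ∫ x in K, G t x ∂μ - (τ - t) • ∫ x in K, G' t x ∂μ‖
      = ‖∫ x in K, (G τ x - G t x - (τ - t) • G' t x) ∂μ‖ := by
        rw [integral_sub (f := fun x => G τ x - G t x) (g := fun x => (τ - t) • G' t x)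
          ((hGint τ hτ.1).sub (hGint t ht)) ((hG't.integrableOn_compact hK).smul (τ - t)),
          integral_sub (hGint τ hτ.1) (hGint t ht), integral_smul]
    _ ≤ ε * ‖τ - t‖ * μ.real K := norm_setIntegral_le_of_norm_le_const hK.measure_lt_top hpt
    _ = ε * μ.real K * ‖τ - t‖ := by ring
    _ ≤ c * ‖τ - t‖ := by gcongr

lemma ContDiffOn.contDiff_slice {E F : Type*} [NormedAddCommGroup E] [NormedSpace ℝ E]
    [NormedAddCommGroup F] [NormedSpace ℝ F] {k : WithTop ℕ∞} {f : ℝ → E → F} {s : Set ℝ}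
    (hf : ContDiffOn ℝ k (fun q : ℝ × E => f q.1 q.2) (s ×ˢ univ)) {t : ℝ} (ht : t ∈ s) :
    ContDiff ℝ k (f t) :=
  contDiffOn_univ.1 <| hf.comp (contDiff_const.prodMk contDiff_id).contDiffOn
    fun _ _ => mk_mem_prod ht (mem_univ _)

lemma DifferentiableOn.hasDerivWithinAt_partial_fst {E F : Type*} [NormedAddCommGroup E]
    [NormedSpace ℝ E] [NormedAddCommGroup F] [NormedSpace ℝ F] {f : ℝ → E → F} {s : Set ℝ}
    {k : Set E} (hf : DifferentiableOn ℝ (fun q : ℝ × E => f q.1 q.2) (s ×ˢ k)) {t : ℝ}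
    (ht : t ∈ s) {x : E} (hx : x ∈ k) :
    HasDerivWithinAt (fun τ => f τ x)
      (fderivWithin ℝ (fun q : ℝ × E => f q.1 q.2) (s ×ˢ k) (t, x) (1, 0)) s t := by
  have := (hf (t, x) (mk_mem_prod ht hx)).hasFDerivWithinAt.comp_hasDerivWithinAt t
    ((hasDerivAt_id t).prodMk (hasDerivAt_const t x)).hasDerivWithinAt
    fun _ hτ => mk_mem_prod hτ hx
  exact this

theorem hasDerivWithinAt_half_integral_dotp_self {E : Type*} [NormedAddCommGroup E]
    [NormedSpace ℝ E] [MeasurableSpace E] [OpensMeasurableSpace E] {μ : Measure E}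
    [IsFiniteMeasureOnCompacts μ] {m : ℕ} {a b : ℝ} (hab : a < b) {K : Set E} (hK : IsCompact K)
    {w : ℝ → E → (Fin m → ℝ)}
    (hw : ContDiffOn ℝ 1 (fun q : ℝ × E => w q.1 q.2) (Icc a b ×ˢ univ))
    {t : ℝ} (ht : t ∈ Icc a b) :
    HasDerivWithinAt (fun τ => 1 / 2 * ∫ x in K, dotp (w τ x) (w τ x) ∂μ)
      (∫ x in K, dotp (derivWithin (fun τ => w τ x) (Icc a b) t) (w t x) ∂μ) (Icc a b) t := by
  set S := Icc a b ×ˢ (univ : Set E)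
  set wₜ : ℝ → E → (Fin m → ℝ) := fun τ x =>
    fderivWithin ℝ (fun q : ℝ × E => w q.1 q.2) S (τ, x) (1, 0)
  have hwₜ : ∀ τ ∈ Icc a b, ∀ x, HasDerivWithinAt (fun σ => w σ x) (wₜ τ x) (Icc a b) τ :=
    fun τ hτ x => (hw.differentiableOn one_ne_zero).hasDerivWithinAt_partial_fst hτ (mem_univ x)
  have hKS : Icc a b ×ˢ K ⊆ S := prod_mono le_rfl (subset_univ _)
  have hwₜc : ContinuousOn (fun q : ℝ × E => wₜ q.1 q.2) (Icc a b ×ˢ K) :=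
    ((hw.continuousOn_fderivWithin ((uniqueDiffOn_Icc hab).prod uniqueDiffOn_univ)
      le_rfl).clm_apply continuousOn_const).mono hKS
  have hwc := hw.continuousOn.mono hKS
  have hE : HasDerivWithinAt (fun τ => ∫ x in K, dotp (w τ x) (w τ x) ∂μ)
      (∫ x in K, (dotp (wₜ t x) (w t x) + dotp (w t x) (wₜ t x)) ∂μ) (Icc a b) t := by
    refine hasDerivWithinAt_setIntegral_of_continuousOn (convex_Icc a b) hK ht
      (fun τ hτ x _ => (hwₜ τ hτ x).dotp (hwₜ τ hτ x)) (fun τ hτ => ?_) ?_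
    · have := (hw.contDiff_slice hτ).continuous
      unfold dotp
      fun_prop
    · show ContinuousOn (fun q : ℝ × E =>
        dotp (wₜ q.1 q.2) (w q.1 q.2) + dotp (w q.1 q.2) (wₜ q.1 q.2)) _
      unfold dotp
      fun_prop
  have hvalue : 1 / 2 * ∫ x in K, (dotp (wₜ t x) (w t x) + dotp (w t x) (wₜ t x)) ∂μ
      = ∫ x in K, dotp (derivWithin (fun τ => w τ x) (Icc a b) t) (w t x) ∂μ := by
    simp only [fun x => (hwₜ t ht x).derivWithin (uniqueDiffOn_Icc hab t ht), dotp_eq_dotProduct,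
      dotProduct_comm (w t _), ← two_mul, integral_const_mul]
    ring
  rw [← hvalue]
  exact hE.const_mul (1 / 2)

theorem stmt13_general {n : ℕ} (η T : ℝ) (hT : 0 < T)
    (u w : ℝ → (Fin n → ℝ) → (Fin n → ℝ)) (p : ℝ → (Fin n → ℝ) → ℝ)
    (hu : ContDiffOn ℝ (⊤:ℕ∞) (fun q : ℝ × (Fin n → ℝ) => u q.1 q.2)
      (Set.Icc 0 T ×ˢ Set.univ))
    (hw : ContDiffOn ℝ (⊤:ℕ∞) (fun q : ℝ × (Fin n → ℝ) => w q.1 q.2)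
      (Set.Icc 0 T ×ˢ Set.univ))
    (hp : ContDiffOn ℝ (⊤:ℕ∞) (fun q : ℝ × (Fin n → ℝ) => p q.1 q.2)
      (Set.Icc 0 T ×ˢ Set.univ))
    (hup : ∀ t ∈ Set.Icc (0:ℝ) T, ZPeriodic (u t))
    (hwp : ∀ t ∈ Set.Icc (0:ℝ) T, ZPeriodic (w t))
    (hpp : ∀ t ∈ Set.Icc (0:ℝ) T, ZPeriodic (p t))
    (hdivu : ∀ t ∈ Set.Icc (0:ℝ) T, ∀ x, diver (u t) x = 0)
    (hdivw : ∀ t ∈ Set.Icc (0:ℝ) T, ∀ x, diver (w t) x = 0)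
    (hpde : ∀ t ∈ Set.Icc (0:ℝ) T, ∀ x,
      derivWithin (fun τ => w τ x) (Set.Icc 0 T) t
        = -advDeriv (u t) (w t) x - lineStretch (u t) (w t) x - gradf (p t) x
          + η • lap (w t) x) :
    ∀ t ∈ Set.Icc (0:ℝ) T,
      HasDerivWithinAt (fun τ => (1/2 : ℝ) * ∫ x in cube n, dotp (w τ x) (w τ x))
        (-(∫ x in cube n, dotp (lineStretch (u t) (w t) x) (w t x))
          - η * ∫ x in cube n, ∑ i, dotp (fderiv ℝ (w t) x (Pi.single i 1))
              (fderiv ℝ (w t) x (Pi.single i 1)))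
        (Set.Icc 0 T) t := by
  intro t ht
  have hsmooth : ∀ {k : ℕ}, (k : WithTop ℕ∞) ≤ (⊤ : ℕ∞) := by exact_mod_cast le_top
  have hE := hasDerivWithinAt_half_integral_dotp_self (μ := volume) hT (isCompact_cube n)
    (hw.of_le hsmooth) ht
  have hrhs : ∀ x, derivWithin (fun τ => w τ x) (Icc 0 T) t
      = linearizedRHS η (u t) (w t) (p t) x := hpde t ht
  simpa only [hrhs, integral_cube_dotp_linearizedRHS_self η ((hu.contDiff_slice ht).of_le hsmooth)
    ((hw.contDiff_slice ht).of_le hsmooth) ((hp.contDiff_slice ht).of_le hsmooth) (hup t ht)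
    (hwp t ht) (hpp t ht) (hdivu t ht) (hdivw t ht)] using hE

/-- energy identity for the linearized equation
`∂_t w = −∇_u w − u'⊗w − ∇p + ηΔw` with divergence-free, spatially
ℤⁿ-periodic data:
`d/dt (½∫|w|²) = −∫⟨u'⊗w, w⟩ − η∫|Dw|²` on `[0,T]`. -/
theorem stmt13 {n : ℕ} (η T : ℝ) (hη : 0 ≤ η) (hT : 0 < T)
    (u w : ℝ → (Fin n → ℝ) → (Fin n → ℝ)) (p : ℝ → (Fin n → ℝ) → ℝ)
    (hu : ContDiffOn ℝ (⊤:ℕ∞) (fun q : ℝ × (Fin n → ℝ) => u q.1 q.2)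
      (Set.Icc 0 T ×ˢ Set.univ))
    (hw : ContDiffOn ℝ (⊤:ℕ∞) (fun q : ℝ × (Fin n → ℝ) => w q.1 q.2)
      (Set.Icc 0 T ×ˢ Set.univ))
    (hp : ContDiffOn ℝ (⊤:ℕ∞) (fun q : ℝ × (Fin n → ℝ) => p q.1 q.2)
      (Set.Icc 0 T ×ˢ Set.univ))
    (hup : ∀ t ∈ Set.Icc (0:ℝ) T, ZPeriodic (u t))
    (hwp : ∀ t ∈ Set.Icc (0:ℝ) T, ZPeriodic (w t))
    (hpp : ∀ t ∈ Set.Icc (0:ℝ) T, ZPeriodic (p t))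
    (hdivu : ∀ t ∈ Set.Icc (0:ℝ) T, ∀ x, diver (u t) x = 0)
    (hdivw : ∀ t ∈ Set.Icc (0:ℝ) T, ∀ x, diver (w t) x = 0)
    (hpde : ∀ t ∈ Set.Icc (0:ℝ) T, ∀ x,
      derivWithin (fun τ => w τ x) (Set.Icc 0 T) t
        = -advDeriv (u t) (w t) x - lineStretch (u t) (w t) x - gradf (p t) x
          + η • lap (w t) x) :
    ∀ t ∈ Set.Icc (0:ℝ) T,
      HasDerivWithinAt (fun τ => (1/2 : ℝ) * ∫ x in cube n, dotp (w τ x) (w τ x))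
        (-(∫ x in cube n, dotp (lineStretch (u t) (w t) x) (w t x))
          - η * ∫ x in cube n, ∑ i, dotp (fderiv ℝ (w t) x (Pi.single i 1))
              (fderiv ℝ (w t) x (Pi.single i 1)))
        (Set.Icc 0 T) t :=
  stmt13_general η T hT u w p hu hw hp hup hwp hpp hdivu hdivw hpde
end
end

section
/- Let n ≥ 2, s > 0, k ∈ ℝⁿ \ {0}, and let k₁^⊥, …, k_{n−1}^⊥ ∈ ℝⁿ be pairwise orthogonal with ⟨k_i^⊥, k⟩ = 0 and |k_i^⊥| = |k|, and define A_{(k,i)}(x) = |k|^{−(s+1)} cos⟨k,x⟩ k_i^⊥ and B_{(k,i)}(x) = |k|^{−(s+1)} sin⟨k,x⟩ k_i^⊥. Then for every x ∈ ℝⁿ and every w ∈ ℝⁿ: Σ_{i=1}^{n−1} ( |DA_{(k,i)}(x)·w|² + |DB_{(k,i)}(x)·w|² ) = (n−1) |k|^{−2s} ⟨k, w⟩², where DX(x)·w denotes the Jacobian matrix of the vector field X at x applied to w. -/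
/-! Each mode field is a plane wave `y ↦ f(⟨k,y⟩) vᵢ`, whose derivative in direction `w` is
`f'(⟨k,x⟩) ⟨k,w⟩ vᵢ`. For the pair `A, B` the squared norms add up to
`|k|^{-2(s+1)} ⟨k,w⟩² |vᵢ|² (sin² + cos²) = |k|^{-2s} ⟨k,w⟩²`, the same for each of the `n - 1`
directions `vᵢ`. -/

noncomputable section
open MeasureTheory

section

variable {n : ℕ}

theorem dotp_self_pos {k : Fin n → ℝ} (hk : k ≠ 0) : 0 < dotp k k := by
  obtain ⟨i, hi⟩ := Function.ne_iff.mp hk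
  exact Finset.sum_pos' (fun j _ => mul_self_nonneg (k j))
    ⟨i, Finset.mem_univ i, mul_self_pos.mpr hi⟩

theorem dotp_smul_self (r : ℝ) (u : Fin n → ℝ) : dotp (r • u) (r • u) = r ^ 2 * dotp u u := by
  simp only [dotp, Pi.smul_apply, smul_eq_mul, Finset.mul_sum]
  exact Finset.sum_congr rfl fun _ _ => by ring

def dotpCLM (k : Fin n → ℝ) : (Fin n → ℝ) →L[ℝ] ℝ :=
  ∑ j, k j • ContinuousLinearMap.proj j

@[simp]
theorem dotpCLM_apply (k y : Fin n → ℝ) : dotpCLM k y = dotp k y := by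
  simp [dotpCLM, dotp]

theorem fderiv_comp_dotp_smul_apply {f : ℝ → ℝ} {f' : ℝ} {k x : Fin n → ℝ}
    (hf : HasDerivAt f f' (dotp k x)) (v w : Fin n → ℝ) :
    fderiv ℝ (fun y => f (dotp k y) • v) x w = (f' * dotp k w) • v := by
  have hdot : HasFDerivAt (dotp k) (dotpCLM k) x := by
    simpa [funext (dotpCLM_apply k)] using (dotpCLM k).hasFDerivAt (x := x)
  rw [((hf.comp_hasFDerivAt x hdot).smul_const v).fderiv (f := fun y => f (dotp k y) • v)]
  simp

end

theorem rpow_neg_add_one_div_two_sq_mul {K : ℝ} (hK : 0 < K) (s : ℝ) :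
    (K ^ (-(s + 1) / 2)) ^ 2 * K = K ^ (-s) := by
  rw [← Real.rpow_natCast, ← Real.rpow_mul hK.le, ← Real.rpow_add_one hK.ne']
  norm_num

theorem stmt19_general {n : ℕ} (hn : 2 ≤ n) (s : ℝ)
    (k : Fin n → ℝ) (hk : k ≠ 0)
    (v : Fin (n-1) → Fin n → ℝ)
    (hnorm : ∀ i, dotp (v i) (v i) = dotp k k)
    (A B : Fin (n-1) → (Fin n → ℝ) → (Fin n → ℝ))
    (hA : ∀ i x, A i x = (Real.rpow (dotp k k) (-(s+1)/2) * Real.cos (dotp k x)) • v i)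
    (hB : ∀ i x, B i x = (Real.rpow (dotp k k) (-(s+1)/2) * Real.sin (dotp k x)) • v i)
    (x w : Fin n → ℝ) :
    ∑ i, (dotp (fderiv ℝ (A i) x w) (fderiv ℝ (A i) x w)
          + dotp (fderiv ℝ (B i) x w) (fderiv ℝ (B i) x w))
      = ((n:ℝ) - 1) * Real.rpow (dotp k k) (-s) * (dotp k w)^2 := by
  set c := Real.rpow (dotp k k) (-(s+1)/2)
  have hAw i : fderiv ℝ (A i) x w = (c * -Real.sin (dotp k x) * dotp k w) • v i := by
    rw [show A i = _ from funext (hA i)]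
    exact fderiv_comp_dotp_smul_apply ((Real.hasDerivAt_cos _).const_mul c) (v i) w
  have hBw i : fderiv ℝ (B i) x w = (c * Real.cos (dotp k x) * dotp k w) • v i := by
    rw [show B i = _ from funext (hB i)]
    exact fderiv_comp_dotp_smul_apply ((Real.hasDerivAt_sin _).const_mul c) (v i) w
  have hterm i : dotp (fderiv ℝ (A i) x w) (fderiv ℝ (A i) x w)
      + dotp (fderiv ℝ (B i) x w) (fderiv ℝ (B i) x w) = c ^ 2 * dotp k k * dotp k w ^ 2 := by
    rw [hAw, hBw, dotp_smul_self, dotp_smul_self, hnorm]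
    linear_combination (c ^ 2 * dotp k k * dotp k w ^ 2) * Real.sin_sq_add_cos_sq (dotp k x)
  simp only [hterm, Finset.sum_const, Finset.card_univ, Fintype.card_fin, nsmul_eq_mul,
    Nat.cast_sub (by omega : 1 ≤ n), Nat.cast_one]
  have hc : c ^ 2 * dotp k k = Real.rpow (dotp k k) (-s) :=
    rpow_neg_add_one_div_two_sq_mul (dotp_self_pos hk) s
  rw [hc, mul_assoc]

/-- for the mode fields
`A_{(k,i)}(x) = |k|^{−(s+1)} cos⟨k,x⟩ k_i^⊥`, `B_{(k,i)}(x) = |k|^{−(s+1)} sin⟨k,x⟩ k_i^⊥`,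
`Σ_{i=1}^{n−1} (|DA_{(k,i)}(x)·w|² + |DB_{(k,i)}(x)·w|²) = (n−1)|k|^{−2s}⟨k,w⟩²`.
Here `|k|^{−(s+1)} = (⟨k,k⟩)^{−(s+1)/2}` and `|k|^{−2s} = (⟨k,k⟩)^{−s}`. -/
theorem stmt19 {n : ℕ} (hn : 2 ≤ n) (s : ℝ) (hs : 0 < s)
    (k : Fin n → ℝ) (hk : k ≠ 0)
    (v : Fin (n-1) → Fin n → ℝ)
    (horth : ∀ i j, i ≠ j → dotp (v i) (v j) = 0)
    (hvk : ∀ i, dotp (v i) k = 0)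
    (hnorm : ∀ i, dotp (v i) (v i) = dotp k k)
    (A B : Fin (n-1) → (Fin n → ℝ) → (Fin n → ℝ))
    (hA : ∀ i x, A i x = (Real.rpow (dotp k k) (-(s+1)/2) * Real.cos (dotp k x)) • v i)
    (hB : ∀ i x, B i x = (Real.rpow (dotp k k) (-(s+1)/2) * Real.sin (dotp k x)) • v i)
    (x w : Fin n → ℝ) :
    ∑ i, (dotp (fderiv ℝ (A i) x w) (fderiv ℝ (A i) x w)
          + dotp (fderiv ℝ (B i) x w) (fderiv ℝ (B i) x w))
      = ((n:ℝ) - 1) * Real.rpow (dotp k k) (-s) * (dotp k w)^2 :=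
  stmt19_general hn s k hk v hnorm A B hA hB x w
end
end
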